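/- Let f be a matrix Schur function on the unit disc (analytic with f(z)†f(z) < 1), α₀ := f(0), and f₁ its Schur transform defined by f₁(z) := z^{-1}(ρ^R)^{-1}(f(z)-α₀)(1-α₀†f(z))^{-1}ρ^L with ρ^R := (1-α₀α₀†)^{1/2}, ρ^L := (1-α₀†α₀)^{1/2}. Then the inverse relation f(z) = (ρ^R)^{-1}·(α₀ + z·f₁(z))·(1 + z·α₀†·f₁(z))^{-1}·ρ^L holds for all z in the disc. -/

import Mathlib

/-! With `w = z f₁(z)` the definition of `f₁` reads `w = (ρ^R)⁻¹ (f - α₀) S⁻¹ ρ^L`,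
`S = 1 - α₀† f`, and it is undone by pure algebra once two facts are known: `α₀ ρ^L = ρ^R α₀`,
because both square roots are one and the same polynomial applied to the intertwined matrices
`1 - α₀† α₀` and `1 - α₀ α₀†`; and `S` is invertible, because `f(z)` is a strict contraction and
`α₀†` a contraction. At `z = 0` the formula for `w` holds trivially, both sides being `0`. -/

open Matrix
open scoped ComplexOrder

attribute [local instance] Matrix.normedAddCommGroup Matrix.normedSpace

/-- The positive semidefinite square root of a positive semidefinite matrix
(restored with its former Mathlib definition). -/
noncomputable def Matrix.PosSemidef.sqrt {n 𝕜 : Type*} [Fintype n] [RCLike 𝕜] [DecidableEq n]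
    {A : Matrix n n 𝕜} (hA : A.PosSemidef) : Matrix n n 𝕜 :=
  (hA.1.eigenvectorUnitary : Matrix n n 𝕜) * diagonal ((↑) ∘ (√·) ∘ hA.1.eigenvalues) *
    (star hA.1.eigenvectorUnitary : Matrix n n 𝕜)

open Polynomial in
theorem SemiconjBy.aeval {R A : Type*} [CommSemiring R] [Semiring A] [Algebra R A]
    {x a b : A} (h : SemiconjBy x a b) (q : R[X]) : SemiconjBy x (aeval a q) (aeval b q) := by
  induction q using Polynomial.induction_on' with
  | add p q hp hq => simpa only [map_add] using hp.add_right hq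
  | monomial k r =>
    simpa only [aeval_monomial] using
      SemiconjBy.mul_right (Algebra.commute_algebraMap_right r x) (h.pow_right k)

theorem SemiconjBy.cfc_of_finite_spectrum {A : Type*} [Ring A] [StarRing A] [Algebra ℝ A]
    [TopologicalSpace A] [ContinuousFunctionalCalculus ℝ A IsSelfAdjoint] {x a b : A}
    (h : SemiconjBy x a b) (f : ℝ → ℝ) (ha : IsSelfAdjoint a) (hb : IsSelfAdjoint b)
    (ha' : (spectrum ℝ a).Finite) (hb' : (spectrum ℝ b).Finite) :
    SemiconjBy x (cfc f a) (cfc f b) := by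
  classical
  set q := Lagrange.interpolate (ha'.union hb').toFinset id f
  have hq : ∀ t ∈ spectrum ℝ a ∪ spectrum ℝ b, q.eval t = f t := fun t ht =>
    Lagrange.eval_interpolate_at_node (v := id) f (Set.injOn_id _)
      ((ha'.union hb').mem_toFinset.2 ht)
  rw [← cfc_congr fun t ht => hq t (.inl ht), ← cfc_congr fun t ht => hq t (.inr ht),
    cfc_polynomial q a, cfc_polynomial q b]
  exact h.aeval q

namespace Matrix

section RCLike

variable {n 𝕜 : Type*} [Fintype n] [DecidableEq n] [RCLike 𝕜]

namespace PosSemidef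

variable {M N : Matrix n n 𝕜}

theorem sqrt_eq_cfc (hM : M.PosSemidef) : hM.sqrt = cfc Real.sqrt M :=
  (hM.1.cfc_eq _).symm

theorem sqrt_mul_self (hM : M.PosSemidef) : hM.sqrt * hM.sqrt = M := by
  rw [sqrt_eq_cfc, ← cfc_mul Real.sqrt Real.sqrt M]
  conv_rhs => rw [← cfc_id ℝ M hM.1.isSelfAdjoint]
  refine cfc_congr fun t ht => Real.mul_self_sqrt ?_
  obtain ⟨i, rfl⟩ := hM.1.spectrum_real_eq_range_eigenvalues ▸ ht
  exact hM.eigenvalues_nonneg i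

theorem isUnit_sqrt (hM : M.PosSemidef) (hMu : IsUnit M) : IsUnit hM.sqrt := by
  rw [isUnit_iff_isUnit_det, ← hM.sqrt_mul_self, det_mul] at hMu
  exact (isUnit_iff_isUnit_det _).2 (isUnit_of_mul_isUnit_left hMu)

theorem mul_sqrt_eq_sqrt_mul (hM : M.PosSemidef) (hN : N.PosSemidef) {A : Matrix n n 𝕜}
    (h : A * M = N * A) : A * hM.sqrt = hN.sqrt * A := by
  rw [sqrt_eq_cfc, sqrt_eq_cfc]
  exact SemiconjBy.cfc_of_finite_spectrum h _ hM.1.isSelfAdjoint hN.1.isSelfAdjoint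
    finite_real_spectrum finite_real_spectrum

end PosSemidef

theorem dotProduct_one_sub_conjTranspose_mul_self_mulVec (A : Matrix n n 𝕜) (x : n → 𝕜) :
    star x ⬝ᵥ ((1 - Aᴴ * A) *ᵥ x) = star x ⬝ᵥ x - star (A *ᵥ x) ⬝ᵥ (A *ᵥ x) := by
  rw [sub_mulVec, one_mulVec, dotProduct_sub, ← mulVec_mulVec, dotProduct_mulVec, ← star_mulVec]

theorem PosSemidef.star_mulVec_dotProduct_le {A : Matrix n n 𝕜}
    (hA : (1 - Aᴴ * A).PosSemidef) (x : n → 𝕜) :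
    star (A *ᵥ x) ⬝ᵥ (A *ᵥ x) ≤ star x ⬝ᵥ x :=
  sub_nonneg.1 (dotProduct_one_sub_conjTranspose_mul_self_mulVec A x ▸
    hA.dotProduct_mulVec_nonneg x)

theorem PosDef.star_mulVec_dotProduct_lt {A : Matrix n n 𝕜} (hA : (1 - Aᴴ * A).PosDef)
    {x : n → 𝕜} (hx : x ≠ 0) : star (A *ᵥ x) ⬝ᵥ (A *ᵥ x) < star x ⬝ᵥ x :=
  sub_pos.1 (dotProduct_one_sub_conjTranspose_mul_self_mulVec A x ▸ hA.dotProduct_mulVec_pos hx)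

/-- A kernel vector of `1 - B * C` would be a fixed point of `B * C`, which `C` shrinks strictly
and `B` does not enlarge. -/
theorem isUnit_one_sub_mul_of_contractions {B C : Matrix n n 𝕜}
    (hB : (1 - Bᴴ * B).PosSemidef) (hC : (1 - Cᴴ * C).PosDef) : IsUnit (1 - B * C) := by
  rw [isUnit_iff_isUnit_det, isUnit_iff_ne_zero, ne_eq, ← exists_mulVec_eq_zero_iff]
  rintro ⟨x, hx, hBCx⟩
  have hfix : B *ᵥ (C *ᵥ x) = x := by
    rwa [sub_mulVec, one_mulVec, sub_eq_zero, ← mulVec_mulVec, eq_comm] at hBCx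
  refine lt_irrefl (star x ⬝ᵥ x) ?_
  calc star x ⬝ᵥ x = star (B *ᵥ (C *ᵥ x)) ⬝ᵥ (B *ᵥ (C *ᵥ x)) := by rw [hfix]
    _ ≤ star (C *ᵥ x) ⬝ᵥ (C *ᵥ x) := hB.star_mulVec_dotProduct_le _
    _ < star x ⬝ᵥ x := hC.star_mulVec_dotProduct_lt hx

end RCLike

theorem schur_step_inverse {n K : Type*} [Fintype n] [DecidableEq n] [CommRing K] [StarRing K]
    {α F R L w : Matrix n n K} (hRR : R * R = 1 - α * αᴴ) (hLL : L * L = 1 - αᴴ * α)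
    (hαL : α * L = R * α) (hαR : αᴴ * R = L * αᴴ)
    (hR : IsUnit R) (hL : IsUnit L) (hS : IsUnit (1 - αᴴ * F))
    (hw : w = R⁻¹ * (F - α) * (1 - αᴴ * F)⁻¹ * L) :
    F = R⁻¹ * (α + w) * (1 + αᴴ * w)⁻¹ * L := by
  have := hR.invertible
  have := hL.invertible
  have := hS.invertible
  set S := 1 - αᴴ * F
  have hRw : R * w = (F - α) * S⁻¹ * L := by simp [hw, Matrix.mul_assoc]
  have hP : α * S + (F - α) = (1 - α * αᴴ) * F := by simp only [S]; noncomm_ring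
  have hQ : S + αᴴ * (F - α) = 1 - αᴴ * α := by simp only [S]; noncomm_ring
  have hnum : α + w = R * (F * S⁻¹ * L) := by
    refine hR.mul_left_cancel ?_
    calc R * (α + w) = (α * S + (F - α)) * S⁻¹ * L := by
          rw [mul_add, hRw, ← hαL, add_mul, add_mul]
          simp [Matrix.mul_assoc]
      _ = R * (R * (F * S⁻¹ * L)) := by
          rw [hP, ← hRR]; simp only [Matrix.mul_assoc]
  have hden : 1 + αᴴ * w = L * S⁻¹ * L := by
    refine hL.mul_left_cancel ?_
    calc L * (1 + αᴴ * w) = (S + αᴴ * (F - α)) * S⁻¹ * L := by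
          rw [mul_add, ← Matrix.mul_assoc, ← hαR, Matrix.mul_assoc, hRw]
          simp [Matrix.mul_assoc, add_mul]
      _ = L * (L * S⁻¹ * L) := by
          rw [hQ, ← hLL]; simp only [Matrix.mul_assoc]
  rw [hnum, hden, Matrix.mul_inv_rev, Matrix.mul_inv_rev, Matrix.inv_inv_of_invertible]
  simp [Matrix.mul_assoc]

end Matrix

theorem schur_transform_inverse_relation_general (p : ℕ)
    (f f₁ : ℂ → Matrix (Fin p) (Fin p) ℂ)
    (hcontr : ∀ z ∈ Metric.ball (0:ℂ) 1,
      ((1 : Matrix (Fin p) (Fin p) ℂ) - (f z)ᴴ * f z).PosDef)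
    (hR : ((1 : Matrix (Fin p) (Fin p) ℂ) - f 0 * (f 0)ᴴ).PosSemidef)
    (hL : ((1 : Matrix (Fin p) (Fin p) ℂ) - (f 0)ᴴ * f 0).PosSemidef)
    (hdef : ∀ z ∈ Metric.ball (0:ℂ) 1, z ≠ 0 →
      f₁ z = z⁻¹ • (hR.sqrt⁻¹ * (f z - f 0) * (1 - (f 0)ᴴ * f z)⁻¹ * hL.sqrt)) :
    ∀ z ∈ Metric.ball (0:ℂ) 1,
      f z = hR.sqrt⁻¹ * (f 0 + z • f₁ z) * (1 + z • ((f 0)ᴴ * f₁ z))⁻¹ * hL.sqrt := by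
  intro z hz
  have hQ : (1 - (f 0)ᴴ * f 0).PosDef := hcontr 0 (Metric.mem_ball_self one_pos)
  have hPu : IsUnit (1 - f 0 * (f 0)ᴴ) := by
    rw [isUnit_iff_isUnit_det, det_one_sub_mul_comm, ← isUnit_iff_isUnit_det]
    exact hQ.isUnit
  have hSu : IsUnit (1 - (f 0)ᴴ * f z) :=
    isUnit_one_sub_mul_of_contractions (by rwa [conjTranspose_conjTranspose]) (hcontr z hz)
  rw [← mul_smul_comm]
  refine schur_step_inverse hR.sqrt_mul_self hL.sqrt_mul_self
    (hL.mul_sqrt_eq_sqrt_mul hR (by noncomm_ring)) (hR.mul_sqrt_eq_sqrt_mul hL (by noncomm_ring))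
    (hR.isUnit_sqrt hPu) (hL.isUnit_sqrt hQ.isUnit) hSu ?_
  rcases eq_or_ne z 0 with rfl | hz0
  · simp
  · rw [hdef z hz hz0, smul_smul, mul_inv_cancel₀ hz0, one_smul]

/-- Inversion of one step of the matrix Schur algorithm:
`f(z) = (ρ^R)⁻¹ (α₀ + z f₁(z)) (1 + z α₀† f₁(z))⁻¹ ρ^L` on the unit disc. -/
theorem schur_transform_inverse_relation (p : ℕ)
    (f f₁ : ℂ → Matrix (Fin p) (Fin p) ℂ)
    (hf : AnalyticOnNhd ℂ f (Metric.ball 0 1))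
    (hcontr : ∀ z ∈ Metric.ball (0:ℂ) 1,
      ((1 : Matrix (Fin p) (Fin p) ℂ) - (f z)ᴴ * f z).PosDef)
    (hR : ((1 : Matrix (Fin p) (Fin p) ℂ) - f 0 * (f 0)ᴴ).PosSemidef)
    (hL : ((1 : Matrix (Fin p) (Fin p) ℂ) - (f 0)ᴴ * f 0).PosSemidef)
    (hf₁ : AnalyticOnNhd ℂ f₁ (Metric.ball 0 1))
    (hdef : ∀ z ∈ Metric.ball (0:ℂ) 1, z ≠ 0 →
      f₁ z = z⁻¹ • (hR.sqrt⁻¹ * (f z - f 0) * (1 - (f 0)ᴴ * f z)⁻¹ * hL.sqrt)) :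
    ∀ z ∈ Metric.ball (0:ℂ) 1,
      f z = hR.sqrt⁻¹ * (f 0 + z • f₁ z) * (1 + z • ((f 0)ᴴ * f₁ z))⁻¹ * hL.sqrt :=
  schur_transform_inverse_relation_general p f f₁ hcontr hR hL hdef
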